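/- Let L be a regular language over a finite alphabet Σ whose syntactic congruence ~_L has exactly N equivalence classes, and suppose L satisfies the algebraic semi-extensible ZG condition for some positive integer n with x^n ~_L x^{2n} for all words x. Then for every threshold p > N, the language L satisfies the self-contained semi-extensible ZG condition with threshold p. -/

import Mathlib

variable {α : Type*}

/-- `u` is a factor of `v`: `v = s ++ u ++ t` for some words `s, t`. -/
def IsFactor (u v : List α) : Prop := ∃ s t : List α, v = s ++ u ++ t

/-- A letter `e` is neutral for the language `L`. -/
def Neutral (L : Set (List α)) (e : α) : Prop :=
  ∀ s t : List α, s ++ t ∈ L ↔ s ++ [e] ++ t ∈ L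

/-- A language is extensible if it contains all extensions of its members. -/
def Extensible (L : Set (List α)) : Prop :=
  ∀ u v : List α, u ∈ L → IsFactor u v → v ∈ L

open Classical in
/-- `u_{-S}`: delete from `u` all occurrences of letters in `S`. -/
noncomputable def removeLetters (S : Set α) (u : List α) : List α :=
  u.filter (fun a => decide (a ∉ S))

/-- `Cond L S`: words `u` such that some `v ∈ L` has `v_{-S}` a factor of `u_{-S}`. -/
def Cond (L : Set (List α)) (S : Set α) : Set (List α) :=
  {u | ∃ v ∈ L, IsFactor (removeLetters S v) (removeLetters S u)}

open Classical in
/-- Number of occurrences of the letter `a` in the word `u`. -/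
noncomputable def countOcc (a : α) (u : List α) : ℕ :=
  u.countP (fun b => decide (b = a))

/-- `T_p(u)`: letters that are not neutral for `L` and occur at least `p` times in `u`. -/
def freqLetters (L : Set (List α)) (p : ℕ) (u : List α) : Set α :=
  {a | ¬ Neutral L a ∧ p ≤ countOcc a u}

/-- Operational semi-extensible ZG condition with threshold `p`. -/
def OperationalSE (L : Set (List α)) (p : ℕ) : Prop :=
  ∀ u : List α, freqLetters L p u = ∅ ∨
    (removeLetters (freqLetters L p u) u ∈ Cond L (freqLetters L p u) ↔ u ∈ L)

/-- Self-contained semi-extensible ZG condition with threshold `p`. -/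
def SelfContainedSE (L : Set (List α)) (p : ℕ) : Prop :=
  ∀ u v : List α, v ∈ L → freqLetters L p u ≠ ∅ →
    IsFactor (removeLetters (freqLetters L p u) v)
             (removeLetters (freqLetters L p u) u) →
    u ∈ L

/-- Syntactic congruence of `L`. -/
def SyntEq (L : Set (List α)) (u v : List α) : Prop :=
  ∀ s t : List α, s ++ u ++ t ∈ L ↔ s ++ v ++ t ∈ L

/-- The setoid on words given by the syntactic congruence of `L`. -/
def syntSetoid (L : Set (List α)) : Setoid (List α) where
  r := SyntEq L
  iseqv := ⟨fun _ _ _ => Iff.rfl, fun h s t => (h s t).symm,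
            fun h1 h2 s t => (h1 s t).trans (h2 s t)⟩

/-- `wpow x k` is the `k`-fold concatenation `x^k`. -/
def wpow (x : List α) : ℕ → List α
  | 0 => []
  | k + 1 => x ++ wpow x k

/-- Algebraic semi-extensible ZG condition for `n`: the ZG equation plus semi-extensibility. -/
def AlgebraicSE (L : Set (List α)) (n : ℕ) : Prop :=
  (∀ x y : List α, SyntEq L (y ++ wpow x (n+1)) (wpow x (n+1) ++ y)) ∧
  (∀ (x y z : List α) (a : α), ¬ Neutral L a → y ∈ L →
    x ++ y ++ z ++ wpow [a] n ∈ L)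

/-- `w[l..r]` with 1-based positions; empty when `r < l`. -/
def wslice (w : List α) (l r : ℕ) : List α := (w.drop (l - 1)).take (r + 1 - l)

/-- The pair `(l, r)` is good: `T_p(w[l..r]) ≠ ∅` and `w[l..r] ∈ Cond(T_p(w[l..r]))`. -/
def Good (L : Set (List α)) (p : ℕ) (w : List α) (l r : ℕ) : Prop :=
  freqLetters L p (wslice w l r) ≠ ∅ ∧
  wslice w l r ∈ Cond L (freqLetters L p (wslice w l r))

/-- The limit `r_l`: least `r ≥ l` such that `(l, r')` is good for all `r ≤ r' ≤ |w|`. -/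
noncomputable def limit (L : Set (List α)) (p : ℕ) (w : List α) (l : ℕ) : ℕ :=
  sInf {r | l ≤ r ∧ ∀ r' : ℕ, r ≤ r' → r' ≤ w.length → Good L p w l r'}

/-! ### Auxiliary development for the proof of Statement 8 -/

namespace ZGPf

variable {α : Type*}

theorem synt_refl (L : Set (List α)) (u : List α) : SyntEq L u u := fun _ _ => Iff.rfl

theorem synt_symm {L : Set (List α)} {u v : List α} (h : SyntEq L u v) : SyntEq L v u :=
  fun s t => (h s t).symm

theorem synt_trans {L : Set (List α)} {u v w : List α} (h1 : SyntEq L u v) (h2 : SyntEq L v w) :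
    SyntEq L u w := fun s t => (h1 s t).trans (h2 s t)

theorem synt_appendR {L : Set (List α)} {u v : List α} (h : SyntEq L u v) (w : List α) :
    SyntEq L (u ++ w) (v ++ w) := fun s t => by
  have := h s (w ++ t)
  simpa [List.append_assoc] using this

theorem synt_appendL {L : Set (List α)} {u v : List α} (h : SyntEq L u v) (w : List α) :
    SyntEq L (w ++ u) (w ++ v) := fun s t => by
  have := h (s ++ w) t
  simpa [List.append_assoc] using this

instance qmonoid (L : Set (List α)) : Monoid (Quotient (syntSetoid L)) where
  mul := Quotient.map₂ (· ++ ·) (by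
    intro a b h c d h'
    exact synt_trans (synt_appendR h c) (synt_appendL h' b))
  one := Quotient.mk _ []
  mul_assoc a b c := Quotient.inductionOn₃ a b c fun x y z =>
    congrArg (Quotient.mk _) (List.append_assoc x y z)
  one_mul a := Quotient.inductionOn a fun x => rfl
  mul_one a := Quotient.inductionOn a fun x => congrArg (Quotient.mk _) (List.append_nil x)

/-- The canonical map to the syntactic quotient. -/
def qk (L : Set (List α)) (w : List α) : Quotient (syntSetoid L) := Quotient.mk _ w

theorem qk_mul (L : Set (List α)) (a b : List α) : qk L a * qk L b = qk L (a ++ b) := rfl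

theorem qk_nil (L : Set (List α)) : qk L ([] : List α) = 1 := rfl

theorem wpow_add (x : List α) (a b : ℕ) : wpow x (a + b) = wpow x a ++ wpow x b := by
  induction a with
  | zero => simp [wpow]
  | succ a ih => simp [wpow, Nat.succ_add, ih]

theorem qk_pow (L : Set (List α)) (x : List α) : ∀ k : ℕ, (qk L x) ^ k = qk L (wpow x k)
  | 0 => by rw [pow_zero]; rfl
  | k + 1 => by rw [pow_succ', qk_pow L x k, qk_mul]; rfl

/-- Products of central elements are central. -/
theorem cmul {M : Type*} [Monoid M] {x y : M} (hx : ∀ m, x * m = m * x)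
    (hy : ∀ m, y * m = m * y) : ∀ m, (x * y) * m = m * (x * y) := by
  intro m
  calc (x * y) * m = x * (y * m) := mul_assoc _ _ _
    _ = x * (m * y) := by rw [hy]
    _ = (x * m) * y := (mul_assoc _ _ _).symm
    _ = (m * x) * y := by rw [hx]
    _ = m * (x * y) := mul_assoc _ _ _

/-- Powers of central elements are central. -/
theorem cpow {M : Type*} [Monoid M] {x : M} (hx : ∀ m, x * m = m * x) :
    ∀ k : ℕ, ∀ m, x ^ k * m = m * x ^ k := by
  intro k
  induction k with
  | zero => intro m; rw [pow_zero, one_mul, mul_one]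
  | succ k ih => intro m; rw [pow_succ']; exact cmul hx ih m

/-- Key absorption lemma: if all `n`-th powers are central idempotents, then
`(γρ)^n` absorbs `γ^n`. -/
theorem lemA {M : Type*} [Monoid M] {n : ℕ} (hn : 0 < n)
    (hidem : ∀ m : M, m ^ n * m ^ n = m ^ n)
    (hcen : ∀ m w : M, w * m ^ n = m ^ n * w)
    (γ ρ : M) : (γ * ρ) ^ n * γ ^ n = (γ * ρ) ^ n := by
  have hn1 : n - 1 + 1 = n := by omega
  set e := (γ * ρ) ^ n with he
  have hee : e * e = e := hidem _
  have hce : ∀ w, w * e = e * w := fun w => hcen _ w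
  set B := ρ * (γ * ρ) ^ (n - 1) with hB
  have hgB : γ * B = e := by
    rw [hB, ← mul_assoc, ← pow_succ', hn1]
  have claim1 : ∀ k, (e * γ) ^ (k + 1) * B ^ (k + 1) = e := by
    intro k
    induction k with
    | zero => rw [pow_one, pow_one, mul_assoc, hgB, hee]
    | succ k ih =>
        have hstep : (e * γ) ^ (k + 1 + 1) * B ^ (k + 1 + 1)
            = (e * γ) * (((e * γ) ^ (k + 1) * B ^ (k + 1)) * B) := by
          rw [pow_succ' (e * γ), pow_succ B]
          simp only [mul_assoc]
        rw [hstep, ih]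
        calc (e * γ) * (e * B) = e * ((γ * e) * B) := by simp only [mul_assoc]
          _ = e * ((e * γ) * B) := by rw [hce γ]
          _ = e * (e * (γ * B)) := by simp only [mul_assoc]
          _ = e * (e * e) := by rw [hgB]
          _ = e := by rw [hee, hee]
  have claim2 : ∀ k, (e * γ) ^ (k + 1) = e * γ ^ (k + 1) := by
    intro k
    induction k with
    | zero => rw [pow_one, pow_one]
    | succ k ih =>
        rw [pow_succ' (e * γ), ih]
        calc (e * γ) * (e * γ ^ (k + 1)) = e * ((γ * e) * γ ^ (k + 1)) := by
              simp only [mul_assoc]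
          _ = e * ((e * γ) * γ ^ (k + 1)) := by rw [hce γ]
          _ = (e * e) * (γ * γ ^ (k + 1)) := by simp only [mul_assoc]
          _ = e * γ ^ (k + 1 + 1) := by rw [hee, ← pow_succ']
  have hDn : (e * γ) ^ n = e * γ ^ n := by
    have := claim2 (n - 1); rwa [hn1] at this
  have hABn : (e * γ) ^ n * B ^ n = e := by
    have := claim1 (n - 1); rwa [hn1] at this
  have hcg : ∀ w, w * γ ^ n = γ ^ n * w := fun w => hcen _ w
  have hDe : (e * γ ^ n) * e = e * γ ^ n := by
    calc (e * γ ^ n) * e = e * (γ ^ n * e) := mul_assoc _ _ _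
      _ = e * (e * γ ^ n) := by rw [← hcg e]
      _ = (e * e) * γ ^ n := (mul_assoc _ _ _).symm
      _ = e * γ ^ n := by rw [hee]
  have hDD : (e * γ ^ n) * (e * γ ^ n) = e * γ ^ n := by
    calc (e * γ ^ n) * (e * γ ^ n) = ((e * γ ^ n) * e) * γ ^ n := (mul_assoc _ _ _).symm
      _ = (e * γ ^ n) * γ ^ n := by rw [hDe]
      _ = e * (γ ^ n * γ ^ n) := mul_assoc _ _ _
      _ = e * γ ^ n := by rw [hidem γ]
  calc e * γ ^ n = (e * γ ^ n) * e := hDe.symm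
    _ = (e * γ ^ n) * ((e * γ) ^ n * B ^ n) := by rw [hABn]
    _ = (e * γ ^ n) * ((e * γ ^ n) * B ^ n) := by rw [hDn]
    _ = ((e * γ ^ n) * (e * γ ^ n)) * B ^ n := (mul_assoc _ _ _).symm
    _ = (e * γ ^ n) * B ^ n := by rw [hDD]
    _ = (e * γ) ^ n * B ^ n := by rw [← hDn]
    _ = e := hABn

theorem countOcc_nil (c : α) : countOcc c ([] : List α) = 0 := rfl

open Classical in
theorem countOcc_cons (c x : α) (w : List α) :
    countOcc c (x :: w) = countOcc c w + (if x = c then 1 else 0) := by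
  simp only [countOcc, List.countP_cons]
  by_cases h : x = c <;> simp [h]

theorem countOcc_pos_mem {c : α} {w : List α} (h : 0 < countOcc c w) : c ∈ w := by
  induction w with
  | nil => rw [countOcc_nil] at h; omega
  | cons x w ih =>
      rw [countOcc_cons] at h
      by_cases hx : x = c
      · rw [hx]; exact List.mem_cons_self
      · rw [if_neg hx] at h
        exact List.mem_cons_of_mem _ (ih (by omega))

theorem removeLetters_cons_mem {S : Set α} {a : α} (h : a ∈ S) (l : List α) :
    removeLetters S (a :: l) = removeLetters S l := by
  simp [removeLetters, List.filter_cons, h]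

theorem removeLetters_cons_not_mem {S : Set α} {a : α} (h : a ∉ S) (l : List α) :
    removeLetters S (a :: l) = a :: removeLetters S l := by
  simp [removeLetters, List.filter_cons, h]

/-- Splitting a word at (at least) `k` occurrences of a letter. -/
theorem occ_split (c : α) : ∀ (w : List α) (k : ℕ), k ≤ countOcc c w →
    ∃ f : ℕ → List α,
      (∀ i, i < k → ∃ b, w = f i ++ [c] ++ b) ∧
      (∀ i j, i < j → j < k → ∃ m, f j = f i ++ [c] ++ m) := by
  intro w
  induction w with
  | nil =>
      intro k hk
      rw [countOcc_nil] at hk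
      have hk0 : k = 0 := by omega
      subst hk0
      exact ⟨fun _ => [], fun i hi => by omega, fun i j hij hj => by omega⟩
  | cons x w ih =>
      intro k hk
      rcases k with _ | k
      · exact ⟨fun _ => [], fun i hi => by omega, fun i j hij hj => by omega⟩
      rw [countOcc_cons] at hk
      by_cases hx : x = c
      · rw [if_pos hx] at hk
        obtain ⟨f, h1, h2⟩ := ih k (by omega)
        refine ⟨fun i => if i = 0 then [] else x :: f (i - 1), ?_, ?_⟩
        · intro i hi
          by_cases h0 : i = 0
          · subst h0
            refine ⟨w, ?_⟩
            simp [hx]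
          · obtain ⟨b, hb⟩ := h1 (i - 1) (by omega)
            refine ⟨b, ?_⟩
            dsimp only
            rw [if_neg h0]
            simp [hb]
        · intro i j hij hj
          have hj0 : ¬ j = 0 := by omega
          by_cases h0 : i = 0
          · subst h0
            refine ⟨f (j - 1), ?_⟩
            dsimp only
            rw [if_pos rfl, if_neg hj0]
            simp [hx]
          · obtain ⟨m, hm⟩ := h2 (i - 1) (j - 1) (by omega) (by omega)
            refine ⟨m, ?_⟩
            dsimp only
            rw [if_neg h0, if_neg hj0]
            simp [hm]
      · rw [if_neg hx] at hk
        obtain ⟨f, h1, h2⟩ := ih (k + 1) (by omega)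
        refine ⟨fun i => x :: f i, ?_, ?_⟩
        · intro i hi
          obtain ⟨b, hb⟩ := h1 i hi
          exact ⟨b, by simp [hb]⟩
        · intro i j hij hj
          obtain ⟨m, hm⟩ := h2 i j hij hj
          exact ⟨m, by simp [hm]⟩

end ZGPf
open ZGPf in
/-- the algebraic condition implies the self-contained condition
for every threshold larger than the number of syntactic classes. -/
theorem selfContained_of_algebraic {α : Type*} [Finite α] (L : Set (List α)) (N : ℕ)
    (hfin : Finite (Quotient (syntSetoid L)))
    (hcard : Nat.card (Quotient (syntSetoid L)) = N)
    (n : ℕ) (hn : 0 < n)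
    (hid : ∀ x : List α, SyntEq L (wpow x n) (wpow x (2 * n)))
    (halg : AlgebraicSE L n) :
    ∀ p : ℕ, N < p → SelfContainedSE L p := by
  classical
  intro p hp u v hv hTne hfac
  set T : Set α := freqLetters L p u with hT
  -- basic facts in the syntactic quotient monoid
  have hidq : ∀ m : Quotient (syntSetoid L), m ^ n * m ^ n = m ^ n := by
    intro m
    induction m using Quotient.inductionOn with
    | h x =>
      show (qk L x) ^ n * (qk L x) ^ n = (qk L x) ^ n
      rw [qk_pow, qk_mul, ← wpow_add]
      have h2 : n + n = 2 * n := by omega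
      rw [h2]
      exact Quotient.sound (synt_symm (hid x))
  have hcentq : ∀ m w : Quotient (syntSetoid L), w * m ^ (n + 1) = m ^ (n + 1) * w := by
    intro m w
    induction m using Quotient.inductionOn with
    | h x =>
      induction w using Quotient.inductionOn with
      | h y =>
        show qk L y * (qk L x) ^ (n + 1) = (qk L x) ^ (n + 1) * qk L y
        rw [qk_pow, qk_mul, qk_mul]
        exact Quotient.sound (halg.1 x y)
  have hpowk : ∀ (m : Quotient (syntSetoid L)) (k : ℕ), (m ^ n) ^ (k + 1) = m ^ n := by
    intro m k
    induction k with
    | zero => rw [pow_one]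
    | succ k ih => rw [pow_succ, ih, hidq]
  have hcentn : ∀ m w : Quotient (syntSetoid L), w * m ^ n = m ^ n * w := by
    intro m w
    calc w * m ^ n = w * (m ^ n) ^ (n + 1) := by rw [hpowk]
      _ = (m ^ n) ^ (n + 1) * w := hcentq _ w
      _ = m ^ n * w := by rw [hpowk]
  have lemA' : ∀ γ ρ : Quotient (syntSetoid L), (γ * ρ) ^ n * γ ^ n = (γ * ρ) ^ n :=
    lemA hn hidq hcentn
  -- pick a frequent letter
  obtain ⟨a, haT⟩ := Set.nonempty_iff_ne_empty.mpr hTne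
  -- pumping loops: for each frequent letter, an absorbing power starting with it
  have hloopAll : ∀ c, c ∈ T → ∃ y : List α,
      (∃ w', y = c :: w') ∧ qk L u * (qk L y) ^ n = qk L u := by
    intro c hc
    have hcnt : N + 1 ≤ countOcc c u := le_trans (by omega) hc.2
    obtain ⟨f, h1, h2⟩ := occ_split c u (N + 1) hcnt
    haveI : Fintype (Quotient (syntSetoid L)) := Fintype.ofFinite _
    have hcards : Fintype.card (Quotient (syntSetoid L)) < Fintype.card (Fin (N + 1)) := by
      rw [Fintype.card_fin, ← Nat.card_eq_fintype_card, hcard]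
      omega
    obtain ⟨i, j, hij, hfeq⟩ := Fintype.exists_ne_map_eq_of_card_lt
      (fun i : Fin (N + 1) => qk L (f i.val)) hcards
    have key : ∀ i j : Fin (N + 1), i.val < j.val → qk L (f i.val) = qk L (f j.val) →
        ∃ y : List α, (∃ w', y = c :: w') ∧ qk L u * (qk L y) ^ n = qk L u := by
      intro i j hlt heq
      obtain ⟨m, hm⟩ := h2 i.val j.val hlt j.isLt
      obtain ⟨b, hb⟩ := h1 j.val j.isLt
      refine ⟨[c] ++ m, ⟨m, rfl⟩, ?_⟩
      have hqy : qk L (f i.val) * qk L ([c] ++ m) = qk L (f i.val) := by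
        rw [qk_mul]
        have : f i.val ++ ([c] ++ m) = f j.val := by
          rw [hm]; simp [List.append_assoc]
        rw [this, ← heq]
      have hqyk : ∀ k, qk L (f i.val) * (qk L ([c] ++ m)) ^ k = qk L (f i.val) := by
        intro k
        induction k with
        | zero => rw [pow_zero, mul_one]
        | succ k ih => rw [pow_succ, ← mul_assoc, ih, hqy]
      have hu : u = f i.val ++ (([c] ++ m) ++ ([c] ++ b)) := by
        rw [hb, hm]; simp [List.append_assoc]
      have hukr : qk L u = qk L (f i.val) * qk L ([c] ++ b) := by
        calc qk L u = qk L (f i.val) * (qk L ([c] ++ m) * qk L ([c] ++ b)) := by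
              rw [qk_mul, qk_mul, ← hu]
          _ = (qk L (f i.val) * qk L ([c] ++ m)) * qk L ([c] ++ b) := (mul_assoc _ _ _).symm
          _ = qk L (f i.val) * qk L ([c] ++ b) := by rw [hqy]
      calc qk L u * (qk L ([c] ++ m)) ^ n
          = qk L (f i.val) * (qk L ([c] ++ b) * (qk L ([c] ++ m)) ^ n) := by
            rw [hukr, mul_assoc]
        _ = qk L (f i.val) * ((qk L ([c] ++ m)) ^ n * qk L ([c] ++ b)) := by
            rw [hcentn (qk L ([c] ++ m)) (qk L ([c] ++ b))]
        _ = (qk L (f i.val) * (qk L ([c] ++ m)) ^ n) * qk L ([c] ++ b) := (mul_assoc _ _ _).symm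
        _ = qk L (f i.val) * qk L ([c] ++ b) := by rw [hqyk n]
        _ = qk L u := hukr.symm
    rcases Nat.lt_trichotomy i.val j.val with h | h | h
    · exact key i j h hfeq
    · exact absurd (Fin.ext h) hij
    · exact key j i h hfeq.symm
  -- the list of frequent letters
  have hTcount : ∀ c ∈ T, 0 < countOcc c u := by
    intro c hc
    have := hc.2
    omega
  set Tlist : List α := (u.toFinset.filter (fun c => c ∈ T)).toList with hTlistdef
  have hTlistT : ∀ c ∈ Tlist, c ∈ T := by
    intro c hc
    rw [hTlistdef, Finset.mem_toList, Finset.mem_filter] at hc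
    exact hc.2
  have hcover : ∀ c ∈ T, c ∈ Tlist := by
    intro c hc
    rw [hTlistdef, Finset.mem_toList, Finset.mem_filter]
    exact ⟨List.mem_toFinset.mpr (countOcc_pos_mem (hTcount c hc)), hc⟩
  -- construction of the absorbing central idempotent word Ew
  have hEind : ∀ l : List α, (∀ c ∈ l, c ∈ T) → ∃ Ew : List α,
      (qk L u * qk L Ew = qk L u) ∧ (∀ m, qk L Ew * m = m * qk L Ew) ∧
      (qk L Ew * qk L Ew = qk L Ew) ∧
      (∀ c ∈ l, qk L Ew * (qk L [c]) ^ n = qk L Ew) := by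
    intro l
    induction l with
    | nil =>
        intro _
        refine ⟨[], ?_, ?_, ?_, ?_⟩
        · rw [qk_nil, mul_one]
        · intro m; rw [qk_nil, one_mul, mul_one]
        · rw [qk_nil, one_mul]
        · intro c hc; exact absurd hc List.not_mem_nil
    | cons c l' ih =>
        intro hl
        have hc : c ∈ T := hl c (List.mem_cons_self)
        obtain ⟨Ew', habs', hcen', hEE', habsorb'⟩ := ih (fun g hg => hl g (List.mem_cons_of_mem _ hg))
        obtain ⟨y, ⟨w', hyw⟩, hyabs⟩ := hloopAll c hc
        refine ⟨wpow y n ++ Ew', ?_, ?_, ?_, ?_⟩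
        all_goals
          have hqe : qk L (wpow y n ++ Ew') = (qk L y) ^ n * qk L Ew' := by
            rw [qk_pow, qk_mul]
        · rw [hqe, ← mul_assoc, hyabs, habs']
        · intro m
          rw [hqe]
          exact cmul (fun m' => (hcentn (qk L y) m').symm) hcen' m
        · rw [hqe]
          calc ((qk L y) ^ n * qk L Ew') * ((qk L y) ^ n * qk L Ew')
              = (qk L y) ^ n * ((qk L Ew' * (qk L y) ^ n) * qk L Ew') := by
                simp only [mul_assoc]
            _ = (qk L y) ^ n * (((qk L y) ^ n * qk L Ew') * qk L Ew') := by
                rw [hcen' ((qk L y) ^ n)]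
            _ = ((qk L y) ^ n * (qk L y) ^ n) * (qk L Ew' * qk L Ew') := by
                simp only [mul_assoc]
            _ = (qk L y) ^ n * qk L Ew' := by rw [hidq, hEE']
        · intro g hg
          rw [hqe]
          rcases List.mem_cons.mp hg with rfl | hg'
          · have hyy : qk L y = qk L [g] * qk L w' := by rw [hyw]; rfl
            calc ((qk L y) ^ n * qk L Ew') * (qk L [g]) ^ n
                = (qk L y) ^ n * (qk L Ew' * (qk L [g]) ^ n) := mul_assoc _ _ _
              _ = (qk L y) ^ n * ((qk L [g]) ^ n * qk L Ew') := by
                  rw [hcentn (qk L [g]) (qk L Ew')]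
              _ = ((qk L y) ^ n * (qk L [g]) ^ n) * qk L Ew' := (mul_assoc _ _ _).symm
              _ = (qk L y) ^ n * qk L Ew' := by rw [hyy, lemA']
          · calc ((qk L y) ^ n * qk L Ew') * (qk L [g]) ^ n
                = (qk L y) ^ n * (qk L Ew' * (qk L [g]) ^ n) := mul_assoc _ _ _
              _ = (qk L y) ^ n * qk L Ew' := by rw [habsorb' g hg']
  obtain ⟨Ew, hEabs, hEcen, hEE, hEcl⟩ := hEind Tlist hTlistT
  have hEc : ∀ c ∈ T, qk L Ew * (qk L [c]) ^ n = qk L Ew := fun c hc => hEcl c (hcover c hc)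
  have hEmE : ∀ m : Quotient (syntSetoid L), (qk L Ew * m) * qk L Ew = qk L Ew * m := by
    intro m
    calc (qk L Ew * m) * qk L Ew = qk L Ew * (m * qk L Ew) := mul_assoc _ _ _
      _ = qk L Ew * (qk L Ew * m) := by rw [← hEcen m]
      _ = (qk L Ew * qk L Ew) * m := (mul_assoc _ _ _).symm
      _ = qk L Ew * m := by rw [hEE]
  have hcons : ∀ (d : α) (l : List α),
      qk L Ew * qk L (d :: l) = (qk L Ew * qk L [d]) * (qk L Ew * qk L l) := by
    intro d l
    have h1 : qk L (d :: l) = qk L [d] * qk L l := (qk_mul L [d] l).symm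
    calc qk L Ew * qk L (d :: l) = qk L Ew * (qk L [d] * qk L l) := by rw [h1]
      _ = (qk L Ew * qk L [d]) * qk L l := (mul_assoc _ _ _).symm
      _ = ((qk L Ew * qk L [d]) * qk L Ew) * qk L l := by rw [hEmE]
      _ = (qk L Ew * qk L [d]) * (qk L Ew * qk L l) := mul_assoc _ _ _
  have hθpow : ∀ (c : α) (k : ℕ),
      (qk L Ew * qk L [c]) ^ (k + 1) = qk L Ew * (qk L [c]) ^ (k + 1) := by
    intro c k
    induction k with
    | zero => rw [pow_one, pow_one]
    | succ k ih =>
        rw [pow_succ' (qk L Ew * qk L [c]), ih]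
        calc (qk L Ew * qk L [c]) * (qk L Ew * (qk L [c]) ^ (k + 1))
            = ((qk L Ew * qk L [c]) * qk L Ew) * (qk L [c]) ^ (k + 1) := (mul_assoc _ _ _).symm
          _ = (qk L Ew * qk L [c]) * (qk L [c]) ^ (k + 1) := by rw [hEmE]
          _ = qk L Ew * (qk L [c] * (qk L [c]) ^ (k + 1)) := mul_assoc _ _ _
          _ = qk L Ew * (qk L [c]) ^ (k + 1 + 1) := by rw [← pow_succ']
  have hθcen : ∀ c, c ∈ T → ∀ m, (qk L Ew * qk L [c]) * m = m * (qk L Ew * qk L [c]) := by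
    intro c hc
    have h1 : (qk L Ew * qk L [c]) ^ (n + 1) = qk L Ew * qk L [c] := by
      rw [hθpow c n, pow_succ, ← mul_assoc, hEc c hc]
    intro m
    calc (qk L Ew * qk L [c]) * m = (qk L Ew * qk L [c]) ^ (n + 1) * m := by rw [h1]
      _ = m * (qk L Ew * qk L [c]) ^ (n + 1) := (hcentq _ m).symm
      _ = m * (qk L Ew * qk L [c]) := by rw [h1]
  have hθpowE : ∀ (c : α) (k : ℕ),
      (qk L Ew * qk L [c]) ^ k * qk L Ew = qk L Ew * (qk L [c]) ^ k := by
    intro c k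
    induction k with
    | zero => rw [pow_zero, pow_zero, one_mul, mul_one]
    | succ k ih =>
        calc (qk L Ew * qk L [c]) ^ (k + 1) * qk L Ew
            = ((qk L Ew * qk L [c]) * (qk L Ew * qk L [c]) ^ k) * qk L Ew := by
              rw [pow_succ']
          _ = (qk L Ew * qk L [c]) * ((qk L Ew * qk L [c]) ^ k * qk L Ew) := mul_assoc _ _ _
          _ = (qk L Ew * qk L [c]) * (qk L Ew * (qk L [c]) ^ k) := by rw [ih]
          _ = ((qk L Ew * qk L [c]) * qk L Ew) * (qk L [c]) ^ k := (mul_assoc _ _ _).symm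
          _ = (qk L Ew * qk L [c]) * (qk L [c]) ^ k := by rw [hEmE]
          _ = qk L Ew * (qk L [c] * (qk L [c]) ^ k) := mul_assoc _ _ _
          _ = qk L Ew * (qk L [c]) ^ (k + 1) := by rw [← pow_succ']
  -- products over lists of frequent letters are central and absorb Ew
  have hGam : ∀ γl : List α, (∀ g ∈ γl, g ∈ T) →
      (∀ m, (qk L Ew * qk L γl) * m = m * (qk L Ew * qk L γl)) ∧
      ((qk L Ew * qk L γl) * qk L Ew = qk L Ew * qk L γl) := by
    intro γl
    induction γl with
    | nil =>
        intro _
        constructor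
        · intro m; rw [qk_nil, mul_one]; exact hEcen m
        · rw [qk_nil, mul_one]; exact hEE
    | cons c γ' ih =>
        intro hl
        have hc : c ∈ T := hl c (List.mem_cons_self)
        obtain ⟨ih1, ih2⟩ := ih (fun g hg => hl g (List.mem_cons_of_mem _ hg))
        constructor
        · intro m
          rw [hcons c γ']
          exact cmul (hθcen c hc) ih1 m
        · rw [hcons c γ', mul_assoc, ih2]
  -- extraction of frequent letters
  have hK2 : ∀ X : List α, ∃ γl : List α, (∀ g ∈ γl, g ∈ T) ∧
      qk L Ew * qk L X = (qk L Ew * qk L γl) * qk L (removeLetters T X) := by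
    intro X
    induction X with
    | nil =>
        refine ⟨[], fun g hg => absurd hg List.not_mem_nil, ?_⟩
        show qk L Ew * qk L [] = (qk L Ew * qk L []) * qk L (removeLetters T [])
        have : removeLetters T ([] : List α) = [] := rfl
        rw [this, qk_nil, mul_one, mul_one]
    | cons d X' ih =>
        obtain ⟨γ', hγ'T, hX'⟩ := ih
        by_cases hd : d ∈ T
        · refine ⟨d :: γ', ?_, ?_⟩
          · intro g hg
            rcases List.mem_cons.mp hg with rfl | hg'
            · exact hd
            · exact hγ'T g hg'
          · rw [removeLetters_cons_mem hd]
            calc qk L Ew * qk L (d :: X')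
                = (qk L Ew * qk L [d]) * (qk L Ew * qk L X') := hcons d X'
              _ = (qk L Ew * qk L [d]) * ((qk L Ew * qk L γ') * qk L (removeLetters T X')) := by
                  rw [hX']
              _ = ((qk L Ew * qk L [d]) * (qk L Ew * qk L γ')) * qk L (removeLetters T X') :=
                  (mul_assoc _ _ _).symm
              _ = (qk L Ew * qk L (d :: γ')) * qk L (removeLetters T X') := by
                  rw [← hcons d γ']
        · refine ⟨γ', hγ'T, ?_⟩
          rw [removeLetters_cons_not_mem hd]
          have h2 : qk L (d :: removeLetters T X') = qk L [d] * qk L (removeLetters T X') :=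
            (qk_mul L [d] _).symm
          calc qk L Ew * qk L (d :: X')
              = (qk L Ew * qk L [d]) * (qk L Ew * qk L X') := hcons d X'
            _ = (qk L Ew * qk L [d]) * ((qk L Ew * qk L γ') * qk L (removeLetters T X')) := by
                rw [hX']
            _ = ((qk L Ew * qk L [d]) * (qk L Ew * qk L γ')) * qk L (removeLetters T X') :=
                (mul_assoc _ _ _).symm
            _ = ((qk L Ew * qk L γ') * (qk L Ew * qk L [d])) * qk L (removeLetters T X') := by
                rw [← (hGam γ' hγ'T).1 (qk L Ew * qk L [d])]
            _ = (((qk L Ew * qk L γ') * qk L Ew) * qk L [d]) * qk L (removeLetters T X') := by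
                simp only [mul_assoc]
            _ = ((qk L Ew * qk L γ') * qk L [d]) * qk L (removeLetters T X') := by
                rw [(hGam γ' hγ'T).2]
            _ = (qk L Ew * qk L γ') * (qk L [d] * qk L (removeLetters T X')) :=
                mul_assoc _ _ _
            _ = (qk L Ew * qk L γ') * qk L (d :: removeLetters T X') := by rw [← h2]
  -- inverses of products of frequent letters modulo Ew
  have hINVind : ∀ γl : List α, (∀ g ∈ γl, g ∈ T) →
      ∃ H : List α, ((qk L Ew * qk L γl) * qk L H = qk L Ew) ∧
        (∀ m, qk L H * m = m * qk L H) := by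
    intro γl
    induction γl with
    | nil =>
        intro _
        refine ⟨[], ?_, ?_⟩
        · rw [qk_nil, mul_one, mul_one]
        · intro m; rw [qk_nil, one_mul, mul_one]
    | cons d γ' ih =>
        intro hl
        have hd : d ∈ T := hl d (List.mem_cons_self)
        obtain ⟨H', hH'1, hH'2⟩ := ih (fun g hg => hl g (List.mem_cons_of_mem _ hg))
        refine ⟨H' ++ (Ew ++ wpow [d] (n - 1)), ?_, ?_⟩
        all_goals
          have hqH : qk L (H' ++ (Ew ++ wpow [d] (n - 1)))
              = qk L H' * (qk L Ew * (qk L [d]) ^ (n - 1)) := by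
            rw [← qk_mul, ← qk_mul, qk_pow]
        · rw [hqH, hcons d γ']
          have hn1 : n - 1 + 1 = n := by omega
          calc ((qk L Ew * qk L [d]) * (qk L Ew * qk L γ')) *
                (qk L H' * (qk L Ew * (qk L [d]) ^ (n - 1)))
              = (qk L Ew * qk L [d]) *
                (((qk L Ew * qk L γ') * qk L H') * (qk L Ew * (qk L [d]) ^ (n - 1))) := by
                simp only [mul_assoc]
            _ = (qk L Ew * qk L [d]) * (qk L Ew * (qk L Ew * (qk L [d]) ^ (n - 1))) := by
                rw [hH'1]
            _ = (qk L Ew * qk L [d]) * ((qk L Ew * qk L Ew) * (qk L [d]) ^ (n - 1)) := by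
                simp only [mul_assoc]
            _ = (qk L Ew * qk L [d]) * (qk L Ew * (qk L [d]) ^ (n - 1)) := by rw [hEE]
            _ = ((qk L Ew * qk L [d]) * qk L Ew) * (qk L [d]) ^ (n - 1) := (mul_assoc _ _ _).symm
            _ = (qk L Ew * qk L [d]) * (qk L [d]) ^ (n - 1) := by rw [hEmE]
            _ = qk L Ew * (qk L [d] * (qk L [d]) ^ (n - 1)) := mul_assoc _ _ _
            _ = qk L Ew * (qk L [d]) ^ (n - 1 + 1) := by rw [← pow_succ']
            _ = qk L Ew * (qk L [d]) ^ n := by rw [hn1]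
            _ = qk L Ew := hEc d hd
        · intro m
          rw [hqH]
          refine cmul hH'2 ?_ m
          have h3 : qk L Ew * (qk L [d]) ^ (n - 1)
              = (qk L Ew * qk L [d]) ^ (n - 1) * qk L Ew := (hθpowE d (n - 1)).symm
          rw [h3]
          exact cmul (cpow (hθcen d hd) (n - 1)) hEcen
  -- assemble everything
  obtain ⟨s, t, hst⟩ := hfac
  obtain ⟨γu, hγuT, hKu⟩ := hK2 u
  obtain ⟨γv, hγvT, hKv⟩ := hK2 v
  obtain ⟨H, hH, hHc⟩ := hINVind γv hγvT
  have hWmem : (Ew ++ γu ++ s ++ H ++ Ew) ++ v ++ t ++ wpow [a] n ∈ L :=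
    halg.2 (Ew ++ γu ++ s ++ H ++ Ew) v t a haT.1 hv
  have hRu : qk L (removeLetters T u)
      = qk L s * (qk L (removeLetters T v) * qk L t) := by
    rw [hst]
    simp only [← qk_mul, mul_assoc]
  have hEcA : qk L Ew * qk L (wpow [a] n) = qk L Ew := by
    rw [← qk_pow]
    exact hEc a haT
  have hUside : qk L u = qk L Ew * (qk L γu * (qk L s *
      (qk L (removeLetters T v) * (qk L t * qk L (wpow [a] n))))) := by
    calc qk L u = qk L u * qk L Ew := hEabs.symm
      _ = qk L u * (qk L Ew * qk L (wpow [a] n)) := by rw [hEcA]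
      _ = (qk L u * qk L Ew) * qk L (wpow [a] n) := (mul_assoc _ _ _).symm
      _ = (qk L Ew * qk L u) * qk L (wpow [a] n) := by rw [← hEcen (qk L u)]
      _ = ((qk L Ew * qk L γu) * qk L (removeLetters T u)) * qk L (wpow [a] n) := by rw [hKu]
      _ = ((qk L Ew * qk L γu) * (qk L s * (qk L (removeLetters T v) * qk L t)))
            * qk L (wpow [a] n) := by rw [hRu]
      _ = qk L Ew * (qk L γu * (qk L s *
            (qk L (removeLetters T v) * (qk L t * qk L (wpow [a] n))))) := by
          simp only [mul_assoc]
  have hWside : qk L ((Ew ++ γu ++ s ++ H ++ Ew) ++ v ++ t ++ wpow [a] n)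
      = qk L Ew * (qk L γu * (qk L s *
        (qk L (removeLetters T v) * (qk L t * qk L (wpow [a] n))))) := by
    have e1 : qk L ((Ew ++ γu ++ s ++ H ++ Ew) ++ v ++ t ++ wpow [a] n)
        = qk L Ew * (qk L γu * (qk L s * (qk L H *
          (qk L Ew * (qk L v * (qk L t * qk L (wpow [a] n))))))) := by
      simp only [← qk_mul, mul_assoc]
    rw [e1]
    have r7 : qk L Ew * (qk L v * (qk L t * qk L (wpow [a] n)))
        = qk L Ew * (qk L γv * (qk L (removeLetters T v) * (qk L t * qk L (wpow [a] n)))) := by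
      calc qk L Ew * (qk L v * (qk L t * qk L (wpow [a] n)))
          = (qk L Ew * qk L v) * (qk L t * qk L (wpow [a] n)) := (mul_assoc _ _ _).symm
        _ = ((qk L Ew * qk L γv) * qk L (removeLetters T v)) * (qk L t * qk L (wpow [a] n)) := by
            rw [hKv]
        _ = qk L Ew * (qk L γv * (qk L (removeLetters T v) * (qk L t * qk L (wpow [a] n)))) := by
            simp only [mul_assoc]
    rw [r7]
    have r2 : qk L H * (qk L Ew * (qk L γv *
        (qk L (removeLetters T v) * (qk L t * qk L (wpow [a] n)))))
        = qk L Ew * (qk L (removeLetters T v) * (qk L t * qk L (wpow [a] n))) := by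
      calc qk L H * (qk L Ew * (qk L γv *
            (qk L (removeLetters T v) * (qk L t * qk L (wpow [a] n)))))
          = (qk L H * (qk L Ew * qk L γv)) *
            (qk L (removeLetters T v) * (qk L t * qk L (wpow [a] n))) := by
            simp only [mul_assoc]
        _ = ((qk L Ew * qk L γv) * qk L H) *
            (qk L (removeLetters T v) * (qk L t * qk L (wpow [a] n))) := by
            rw [hHc (qk L Ew * qk L γv)]
        _ = qk L Ew * (qk L (removeLetters T v) * (qk L t * qk L (wpow [a] n))) := by
            rw [hH]
    rw [r2]
    have rE : ∀ m x : Quotient (syntSetoid L), m * (qk L Ew * x) = qk L Ew * (m * x) := by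
      intro m x
      rw [← mul_assoc, ← hEcen m, mul_assoc]
    rw [rE (qk L s), rE (qk L γu), ← mul_assoc, hEE]
  have hQ : qk L u = qk L ((Ew ++ γu ++ s ++ H ++ Ew) ++ v ++ t ++ wpow [a] n) :=
    hUside.trans hWside.symm
  have hsynt : SyntEq L u ((Ew ++ γu ++ s ++ H ++ Ew) ++ v ++ t ++ wpow [a] n) :=
    Quotient.exact hQ
  have hfin' := hsynt [] []
  simp only [List.nil_append, List.append_nil] at hfin'
  exact hfin'.mpr hWmem
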